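/- arXiv:1509.06970 — 9 statements merged into one kernel-verified Lean document; each statement's English description precedes it below -/
import Mathlib

section
/- Consider the Wolbachia mosquito ODE system. Assume λ : [0,∞) → ℝ is continuous and strictly monotone decreasing with λ(F_tot) → λ_min > 0 as F_tot → ∞, λ(0) > min{μ_f, μ_fw} and λ_min < min{μ_f, μ_fw}. Then every global solution (M, F, M_w, F_w) on [0,∞) with nonnegative components and with total population N(t) = M(t)+F(t)+M_w(t)+F_w(t) > 0 for all t is bounded; moreover limsup_{t→∞} (F(t)+F_w(t)) ≤ F̄, where F̄ is the unique value with λ(F̄) = min{μ_f, μ_fw}, and M(t)+M_w(t) is bounded on [0,∞). -/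
open Filter Set

/-!
Write `G = F + F_w` and `H = M + M_w`. The births into either sex total at most `H G`, and
`H ≤ N`, so `G' ≤ (λ(G) - μ) G` with `μ = min μ_f μ_fw`, and `H' ≤ λ(G) G - min μ_m μ_mw · H`.
Since `λ` is decreasing with `λ(F̄) = μ`, the female total cannot increase above `max (G 0) F̄`,
and above `F̄ + ε` it decreases at a uniform rate, so it eventually stays below `F̄ + ε`. The male
total then obeys a linear inequality with a bounded source term.
-/

section Comparison

variable {g g' : ℝ → ℝ} {a K : ℝ}

lemma le_of_hasDerivAt_nonpos_above (hg : ∀ t ≥ a, HasDerivAt g (g' t) t) (ha : g a ≤ K)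
    (hd : ∀ t ≥ a, K < g t → g' t ≤ 0) : ∀ t ≥ a, g t ≤ K := by
  -- Fence `g` by the lines `K + δ (1 + (s - a))`, whose slope `δ > 0` beats `g'` at contact.
  have fence : ∀ δ > 0, ∀ t ≥ a, g t ≤ K + δ * (1 + (t - a)) := by
    intro δ hδ t ht
    refine image_le_of_deriv_right_lt_deriv_boundary (B := fun s => K + δ * (1 + (s - a)))
      (B' := fun _ => δ)
      (fun x hx => (hg x hx.1).continuousAt.continuousWithinAt)
      (fun x hx => (hg x hx.1).hasDerivWithinAt) (by linarith)
      (fun x => by simpa using ((hasDerivAt_id x).sub_const a).const_add 1 |>.const_mul δ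
        |>.const_add K) (fun x hx hgx => ?_) (right_mem_Icc.2 ht)
    have : K < g x := by rw [hgx]; nlinarith [hx.1]
    exact (hd x hx.1 this).trans_lt hδ
  intro t ht
  have hpos : 0 < 1 + (t - a) := by linarith
  refine le_of_forall_pos_le_add fun ε hε => ?_
  simpa [div_mul_cancel₀ _ hpos.ne'] using fence (ε / (1 + (t - a))) (div_pos hε hpos) t ht

lemma exists_le_of_hasDerivAt_le_neg_above {c L : ℝ} (hg : ∀ t ≥ a, HasDerivAt g (g' t) t)
    (hc : 0 < c) (hL : ∀ t ≥ a, L ≤ g t) (hd : ∀ t ≥ a, K < g t → g' t ≤ -c) :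
    ∃ t ≥ a, g t ≤ K := by
  by_contra! habove
  have hdecay : ∀ b ≥ a, g b - g a ≤ -c * (b - a) :=
    fun b hb => (convex_Ici a).image_sub_le_mul_sub_of_deriv_le
      (fun x hx => (hg x hx).continuousAt.continuousWithinAt)
      (fun x hx => (hg x (interior_subset hx)).differentiableAt.differentiableWithinAt)
      (fun x hx => by
        have hx : a ≤ x := interior_subset hx
        exact (hg x hx).deriv ▸ hd x hx (habove x hx))
      a self_mem_Ici b hb hb
  set b := a + (g a - L + 1) / c
  have hb : a ≤ b := le_add_of_nonneg_right (div_nonneg (by linarith [hL a le_rfl]) hc.le)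
  have hcb : c * (b - a) = g a - L + 1 := by simp only [b]; field_simp; ring
  linarith [hdecay b hb, hL b hb]

lemma eventually_le_of_hasDerivAt_le_neg_above {c L : ℝ}
    (hg : ∀ t ≥ a, HasDerivAt g (g' t) t) (hc : 0 < c) (hL : ∀ t ≥ a, L ≤ g t)
    (hd : ∀ t ≥ a, K < g t → g' t ≤ -c) : ∀ᶠ t in atTop, g t ≤ K := by
  obtain ⟨T, hT, hgT⟩ := exists_le_of_hasDerivAt_le_neg_above hg hc hL hd
  exact eventually_atTop.2 ⟨T, le_of_hasDerivAt_nonpos_above (fun t ht => hg t (hT.trans ht)) hgT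
    fun t ht hK => (hd t (hT.trans ht) hK).trans (neg_nonpos.2 hc.le)⟩

lemma le_max_of_hasDerivAt_le_sub_mul {m C : ℝ} (hg : ∀ t ≥ a, HasDerivAt g (g' t) t)
    (hm : 0 < m) (hrate : ∀ t ≥ a, g' t ≤ C - m * g t) : ∀ t ≥ a, g t ≤ max (g a) (C / m) :=
  le_of_hasDerivAt_nonpos_above hg (le_max_left _ _) fun t ht hgt => by
    have : C < m * g t := (div_lt_iff₀' hm).1 ((le_max_right _ _).trans_lt hgt)
    linarith [hrate t ht]

end Comparison

lemma AntitoneOn.le_of_tendsto_atTop {f : ℝ → ℝ} {a L : ℝ} (hf : AntitoneOn f (Ici a))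
    (hlim : Tendsto f atTop (nhds L)) : ∀ x ≥ a, L ≤ f x := fun x hx =>
  le_of_tendsto hlim <| eventually_atTop.2 ⟨x, fun _ hy => hf hx (hx.trans hy) hy⟩

section Logistic

variable {ℓ : ℝ → ℝ} {μ x₀ : ℝ}

lemma logistic_rate_le (hℓ : AntitoneOn ℓ (Ici 0)) (hx₀ : 0 ≤ x₀) (hμ : ℓ x₀ = μ) {K x : ℝ}
    (hK : x₀ ≤ K) (hx : K ≤ x) : ℓ x * x - μ * x ≤ (ℓ K - μ) * K := by
  have hK0 : 0 ≤ K := hx₀.trans hK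
  have hℓx : ℓ x ≤ ℓ K := hℓ hK0 (hK0.trans hx) hx
  have hℓK : ℓ K ≤ μ := hμ ▸ hℓ hx₀ hK0 hK
  nlinarith

variable {g g' : ℝ → ℝ} {a : ℝ}

lemma le_max_of_hasDerivAt_le_logistic (hg : ∀ t ≥ a, HasDerivAt g (g' t) t)
    (hrate : ∀ t ≥ a, g' t ≤ ℓ (g t) * g t - μ * g t) (hℓ : AntitoneOn ℓ (Ici 0))
    (hx₀ : 0 ≤ x₀) (hμ : ℓ x₀ = μ) : ∀ t ≥ a, g t ≤ max (g a) x₀ :=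
  le_of_hasDerivAt_nonpos_above hg (le_max_left _ _) fun t ht hgt => by
    have := logistic_rate_le hℓ hx₀ hμ le_rfl ((le_max_right _ _).trans hgt.le)
    rw [hμ, sub_self, zero_mul] at this
    exact (hrate t ht).trans this

lemma limsup_le_of_hasDerivAt_le_logistic (hg : ∀ t ≥ a, HasDerivAt g (g' t) t)
    (hg0 : ∀ t ≥ a, 0 ≤ g t) (hrate : ∀ t ≥ a, g' t ≤ ℓ (g t) * g t - μ * g t)
    (hℓ : StrictAntiOn ℓ (Ici 0)) (hx₀ : 0 ≤ x₀) (hμ : ℓ x₀ = μ) :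
    limsup g atTop ≤ x₀ := by
  refine le_of_forall_pos_le_add fun ε hε => ?_
  have hK : ℓ (x₀ + ε) < μ := hμ ▸ hℓ hx₀ (by simp only [mem_Ici]; linarith) (by linarith)
  refine limsup_le_of_le (isCoboundedUnder_le_of_eventually_le atTop
    (eventually_atTop.2 ⟨a, hg0⟩)) ?_
  refine eventually_le_of_hasDerivAt_le_neg_above hg (c := (μ - ℓ (x₀ + ε)) * (x₀ + ε))
    (mul_pos (by linarith) (by linarith)) hg0 fun t ht hgt => ?_
  have := logistic_rate_le hℓ.antitoneOn hx₀ hμ (le_add_of_nonneg_right hε.le) hgt.le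
  linarith [hrate t ht]

end Logistic

lemma births_add_le {β τ q s m f mw fw : ℝ} (hβ : 0 ≤ β) (hq : 0 ≤ q) (hs : s ≤ (1 - β) * τ)
    (hm : 0 ≤ m) (hf : 0 ≤ f) (hmw : 0 ≤ mw) (hfw : 0 ≤ fw) :
    m * f + (1 - β) * (1 - τ) * (m * fw + mw * fw) + (1 - q) * (mw * f) +
      s * (m * fw + mw * fw) ≤ (m + mw) * (f + fw) := by
  have hX : 0 ≤ m * fw + mw * fw := by positivity
  nlinarith [mul_le_mul_of_nonneg_right hs hX, mul_nonneg hβ hX, mul_nonneg hq (mul_nonneg hmw hf)]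

lemma total_rate_le_of_births_le {μ₁ μ₂ ℓ n h g x y b c : ℝ} (hx : 0 ≤ x) (hy : 0 ≤ y)
    (hℓ : 0 ≤ ℓ) (hn : 0 < n) (hg : 0 ≤ g) (hh : h ≤ n) (hb : b + c ≤ h * g) :
    -μ₁ * x + ℓ / n * b + (-μ₂ * y + ℓ / n * c) ≤ ℓ * g - min μ₁ μ₂ * (x + y) := by
  have hbirth : ℓ / n * (b + c) ≤ ℓ * g :=
    calc ℓ / n * (b + c) ≤ ℓ / n * (n * g) := by gcongr; exact hb.trans (by gcongr)
      _ = ℓ * g := by field_simp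
  nlinarith [min_le_left μ₁ μ₂, min_le_right μ₁ μ₂]

theorem wolbachia_solutions_bounded_general
    (μm μf μmw μfw β τ q γ lamMin : ℝ)
    (hμm : 0 < μm) (hμmw : 0 < μmw)
    (hβ : β ∈ Set.Icc (0 : ℝ) 1) (hτ : τ ∈ Set.Icc (0 : ℝ) 1)
    (hq : q ∈ Set.Icc (0 : ℝ) 1) (hγ : γ ∈ Set.Icc (0 : ℝ) 1)
    (lam : ℝ → ℝ)
    (hcont : ContinuousOn lam (Set.Ici 0))
    (hanti : StrictAntiOn lam (Set.Ici 0))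
    (hlim : Filter.Tendsto lam Filter.atTop (nhds lamMin))
    (hlamMinpos : 0 < lamMin)
    (hlam0 : min μf μfw < lam 0)
    (hlamMin : lamMin < min μf μfw)
    (M F Mw Fw : ℝ → ℝ)
    (hnonneg : ∀ t ≥ (0 : ℝ), 0 ≤ M t ∧ 0 ≤ F t ∧ 0 ≤ Mw t ∧ 0 ≤ Fw t)
    (hN : ∀ t ≥ (0 : ℝ), 0 < M t + F t + Mw t + Fw t)
    (hM : ∀ t ≥ (0 : ℝ), HasDerivAt M
      (-μm * M t + lam (F t + Fw t) / (M t + F t + Mw t + Fw t) *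
        (M t * F t + (1 - β) * (1 - τ) * (M t * Fw t + Mw t * Fw t) +
          (1 - q) * (Mw t * F t))) t)
    (hF : ∀ t ≥ (0 : ℝ), HasDerivAt F
      (-μf * F t + lam (F t + Fw t) / (M t + F t + Mw t + Fw t) *
        (M t * F t + (1 - β) * (1 - τ) * (M t * Fw t + Mw t * Fw t) +
          (1 - q) * (Mw t * F t))) t)
    (hMw : ∀ t ≥ (0 : ℝ), HasDerivAt Mw
      (-μmw * Mw t + lam (F t + Fw t) / (M t + F t + Mw t + Fw t) *
        ((1 - β) * τ * (1 - γ) * (M t * Fw t + Mw t * Fw t))) t)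
    (hFw : ∀ t ≥ (0 : ℝ), HasDerivAt Fw
      (-μfw * Fw t + lam (F t + Fw t) / (M t + F t + Mw t + Fw t) *
        ((1 - β) * τ * (M t * Fw t + Mw t * Fw t))) t) :
    (∃ C : ℝ, ∀ t ≥ (0 : ℝ), M t + F t + Mw t + Fw t ≤ C) ∧
    (∃! Fbar : ℝ, 0 ≤ Fbar ∧ lam Fbar = min μf μfw) ∧
    (∀ Fbar : ℝ, 0 ≤ Fbar → lam Fbar = min μf μfw →
      Filter.limsup (fun t => F t + Fw t) Filter.atTop ≤ Fbar) ∧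
    (∃ C : ℝ, ∀ t ≥ (0 : ℝ), M t + Mw t ≤ C) := by
  have hlam_nonneg : ∀ x ≥ 0, 0 ≤ lam x := fun x hx =>
    hlamMinpos.le.trans (hanti.antitoneOn.le_of_tendsto_atTop hlim x hx)
  obtain ⟨T, hT, hT0⟩ := ((hlim.eventually_lt_const hlamMin).and (eventually_ge_atTop 0)).exists
  obtain ⟨Fbar, ⟨hFbar0, -⟩, hFbar⟩ := intermediate_value_Icc' hT0
    (hcont.mono Icc_subset_Ici_self) ⟨hT.le, hlam0.le⟩
  have hβτγ : (1 - β) * τ * (1 - γ) ≤ (1 - β) * τ :=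
    mul_le_of_le_one_right (mul_nonneg (sub_nonneg.2 hβ.2) hτ.1) (by linarith [hγ.1])
  obtain ⟨G', hG, hGrate⟩ : ∃ G' : ℝ → ℝ,
      (∀ t ≥ (0 : ℝ), HasDerivAt (fun s => F s + Fw s) (G' t) t) ∧
      ∀ t ≥ (0 : ℝ), G' t ≤ lam (F t + Fw t) * (F t + Fw t) - min μf μfw * (F t + Fw t) := by
    refine ⟨_, fun t ht => (hF t ht).add (hFw t ht), fun t ht => ?_⟩
    obtain ⟨hMt, hFt, hMwt, hFwt⟩ := hnonneg t ht
    exact total_rate_le_of_births_le hFt hFwt (hlam_nonneg _ (add_nonneg hFt hFwt)) (hN t ht)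
      (add_nonneg hFt hFwt) (by linarith) (births_add_le hβ.1 hq.1 le_rfl hMt hFt hMwt hFwt)
  have hGbound := le_max_of_hasDerivAt_le_logistic hG hGrate hanti.antitoneOn hFbar0 hFbar
  obtain ⟨H', hH, hHrate⟩ : ∃ H' : ℝ → ℝ,
      (∀ t ≥ (0 : ℝ), HasDerivAt (fun s => M s + Mw s) (H' t) t) ∧
      ∀ t ≥ (0 : ℝ), H' t ≤ lam 0 * max (F 0 + Fw 0) Fbar - min μm μmw * (M t + Mw t) := by
    refine ⟨_, fun t ht => (hM t ht).add (hMw t ht), fun t ht => ?_⟩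
    obtain ⟨hMt, hFt, hMwt, hFwt⟩ := hnonneg t ht
    have hG0 := add_nonneg hFt hFwt
    refine (total_rate_le_of_births_le hMt hMwt (hlam_nonneg _ hG0) (hN t ht) hG0 (by linarith)
      (births_add_le hβ.1 hq.1 hβτγ hMt hFt hMwt hFwt)).trans (sub_le_sub_right ?_ _)
    exact mul_le_mul (hanti.antitoneOn self_mem_Ici hG0 hG0) (hGbound t ht) hG0
      (hlam_nonneg 0 le_rfl)
  have hHbound := le_max_of_hasDerivAt_le_sub_mul hH (lt_min hμm hμmw) hHrate
  have htotal (t : ℝ) : M t + F t + Mw t + Fw t = F t + Fw t + (M t + Mw t) := by ring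
  refine ⟨⟨_, fun t ht => (htotal t).trans_le (add_le_add (hGbound t ht) (hHbound t ht))⟩,
    ⟨Fbar, ⟨hFbar0, hFbar⟩, fun y hy => hanti.injOn hy.1 hFbar0 (hy.2.trans hFbar.symm)⟩,
    fun Fb hFb0 hFb => ?_, ⟨_, hHbound⟩⟩
  exact limsup_le_of_hasDerivAt_le_logistic hG (fun t ht => by linarith [hnonneg t ht]) hGrate
    hanti hFb0 hFb

theorem wolbachia_solutions_bounded
    (μm μf μmw μfw β τ q γ lamMin : ℝ)
    (hμm : 0 < μm) (hμf : 0 < μf) (hμmw : 0 < μmw) (hμfw : 0 < μfw)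
    (hβ : β ∈ Set.Icc (0 : ℝ) 1) (hτ : τ ∈ Set.Icc (0 : ℝ) 1)
    (hq : q ∈ Set.Icc (0 : ℝ) 1) (hγ : γ ∈ Set.Icc (0 : ℝ) 1)
    (lam : ℝ → ℝ)
    (hcont : ContinuousOn lam (Set.Ici 0))
    (hanti : StrictAntiOn lam (Set.Ici 0))
    (hlim : Filter.Tendsto lam Filter.atTop (nhds lamMin))
    (hlamMinpos : 0 < lamMin)
    (hlam0 : min μf μfw < lam 0)
    (hlamMin : lamMin < min μf μfw)
    (M F Mw Fw : ℝ → ℝ)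
    (hnonneg : ∀ t ≥ (0 : ℝ), 0 ≤ M t ∧ 0 ≤ F t ∧ 0 ≤ Mw t ∧ 0 ≤ Fw t)
    (hN : ∀ t ≥ (0 : ℝ), 0 < M t + F t + Mw t + Fw t)
    (hM : ∀ t ≥ (0 : ℝ), HasDerivAt M
      (-μm * M t + lam (F t + Fw t) / (M t + F t + Mw t + Fw t) *
        (M t * F t + (1 - β) * (1 - τ) * (M t * Fw t + Mw t * Fw t) +
          (1 - q) * (Mw t * F t))) t)
    (hF : ∀ t ≥ (0 : ℝ), HasDerivAt F
      (-μf * F t + lam (F t + Fw t) / (M t + F t + Mw t + Fw t) *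
        (M t * F t + (1 - β) * (1 - τ) * (M t * Fw t + Mw t * Fw t) +
          (1 - q) * (Mw t * F t))) t)
    (hMw : ∀ t ≥ (0 : ℝ), HasDerivAt Mw
      (-μmw * Mw t + lam (F t + Fw t) / (M t + F t + Mw t + Fw t) *
        ((1 - β) * τ * (1 - γ) * (M t * Fw t + Mw t * Fw t))) t)
    (hFw : ∀ t ≥ (0 : ℝ), HasDerivAt Fw
      (-μfw * Fw t + lam (F t + Fw t) / (M t + F t + Mw t + Fw t) *
        ((1 - β) * τ * (M t * Fw t + Mw t * Fw t))) t) :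
    (∃ C : ℝ, ∀ t ≥ (0 : ℝ), M t + F t + Mw t + Fw t ≤ C) ∧
    (∃! Fbar : ℝ, 0 ≤ Fbar ∧ lam Fbar = min μf μfw) ∧
    (∀ Fbar : ℝ, 0 ≤ Fbar → lam Fbar = min μf μfw →
      Filter.limsup (fun t => F t + Fw t) Filter.atTop ≤ Fbar) ∧
    (∃ C : ℝ, ∀ t ≥ (0 : ℝ), M t + Mw t ≤ C) :=
  wolbachia_solutions_bounded_general μm μf μmw μfw β τ q γ lamMin hμm hμmw hβ hτ hq hγ lam hcont
    hanti hlim hlamMinpos hlam0 hlamMin M F Mw Fw hnonneg hN hM hF hMw hFw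
end

section
/- Assume λ : [0,∞) → ℝ is continuous and strictly monotone decreasing with λ(0) > μ_f + μ_m and λ(F_tot) → λ_min as F_tot → ∞, where λ_min < μ_f + μ_m. Then there exists a unique F* > 0 with λ(F*) = μ_f + μ_m, and with M* = μ_f F*/μ_m the constant quadruple (M, F, M_w, F_w) = (M*, F*, 0, 0) is an equilibrium of the Wolbachia mosquito ODE system, i.e. all four right-hand sides vanish at this point; moreover this is the only equilibrium with M_w = F_w = 0 and F > 0. -/
/-!
STATEMENT 1: Existence and uniqueness of the Wolbachia-free boundary
equilibrium `(M*, F*, 0, 0)` of the sex-structured Wolbachia mosquito model,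
where `lam F* = μ_f + μ_m` and `M* = μ_f F* / μ_m`.
-/

open Filter Set

theorem wolbachia_free_equilibrium_exists_unique
    (μm μf μmw μfw β τ q γ lamMin : ℝ)
    (hμm : 0 < μm) (hμf : 0 < μf) (hμmw : 0 < μmw) (hμfw : 0 < μfw)
    (hβ : β ∈ Set.Icc (0 : ℝ) 1) (hτ : τ ∈ Set.Icc (0 : ℝ) 1)
    (hq : q ∈ Set.Icc (0 : ℝ) 1) (hγ : γ ∈ Set.Icc (0 : ℝ) 1)
    (lam : ℝ → ℝ)
    (hcont : ContinuousOn lam (Set.Ici 0))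
    (hanti : StrictAntiOn lam (Set.Ici 0))
    (hlam0 : μf + μm < lam 0)
    (hlim : Filter.Tendsto lam Filter.atTop (nhds lamMin))
    (hlamMin : lamMin < μf + μm) :
    ∃ Fstar : ℝ, 0 < Fstar ∧ lam Fstar = μf + μm ∧
      (∀ F' : ℝ, 0 < F' → lam F' = μf + μm → F' = Fstar) ∧
      (let Mstar := μf * Fstar / μm;
        -- the four right-hand sides of the system vanish at (M*, F*, 0, 0)
        (-μm * Mstar + lam (Fstar + 0) / (Mstar + Fstar + 0 + 0) *
          (Mstar * Fstar + (1 - β) * (1 - τ) * (Mstar * 0 + 0 * 0) +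
            (1 - q) * (0 * Fstar)) = 0) ∧
        (-μf * Fstar + lam (Fstar + 0) / (Mstar + Fstar + 0 + 0) *
          (Mstar * Fstar + (1 - β) * (1 - τ) * (Mstar * 0 + 0 * 0) +
            (1 - q) * (0 * Fstar)) = 0) ∧
        (-μmw * 0 + lam (Fstar + 0) / (Mstar + Fstar + 0 + 0) *
          ((1 - β) * τ * (1 - γ) * (Mstar * 0 + 0 * 0)) = 0) ∧
        (-μfw * 0 + lam (Fstar + 0) / (Mstar + Fstar + 0 + 0) *
          ((1 - β) * τ * (Mstar * 0 + 0 * 0)) = 0) ∧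
        -- uniqueness: the only equilibrium with M_w = F_w = 0 and F > 0
        (∀ M F : ℝ, 0 < F →
          (-μm * M + lam (F + 0) / (M + F + 0 + 0) *
            (M * F + (1 - β) * (1 - τ) * (M * 0 + 0 * 0) +
              (1 - q) * (0 * F)) = 0) →
          (-μf * F + lam (F + 0) / (M + F + 0 + 0) *
            (M * F + (1 - β) * (1 - τ) * (M * 0 + 0 * 0) +
              (1 - q) * (0 * F)) = 0) →
          M = Mstar ∧ F = Fstar)) := by
  set c := μf + μm with hc
  -- find B with lam B < c
  obtain ⟨B, hB0, hBlt⟩ : ∃ B, 0 ≤ B ∧ lam B < c := by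
    have hev : ∀ᶠ x in atTop, lam x < c := hlim.eventually (eventually_lt_nhds hlamMin)
    obtain ⟨B, hB⟩ := ((eventually_ge_atTop (0:ℝ)).and hev).exists
    exact ⟨B, hB.1, hB.2⟩
  have hsub : Icc (lam B) (lam 0) ⊆ lam '' Icc 0 B :=
    intermediate_value_Icc' hB0 (hcont.mono (Icc_subset_Ici_self))
  obtain ⟨Fstar, hFmem, hFeq⟩ := hsub ⟨le_of_lt hBlt, le_of_lt hlam0⟩
  have hFpos : 0 < Fstar := by
    rcases lt_or_eq_of_le hFmem.1 with h | h
    · exact h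
    · exfalso; rw [← h] at hFeq; linarith
  have huniq : ∀ F' : ℝ, 0 < F' → lam F' = c → F' = Fstar := by
    intro F' hF' hF'eq
    exact hanti.injOn (le_of_lt hF') hFmem.1 (by rw [hF'eq, hFeq])
  refine ⟨Fstar, hFpos, hFeq, huniq, ?_⟩
  intro Mstar
  have hMstar : Mstar = μf * Fstar / μm := rfl
  have hS : Mstar + Fstar ≠ 0 := by
    have : 0 < Mstar := by rw [hMstar]; positivity
    linarith
  have hlamF : lam (Fstar + 0) = c := by rw [add_zero, hFeq]
  refine ⟨?_, ?_, by ring, by ring, ?_⟩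
  · rw [hlamF]; rw [hMstar] at hS ⊢
    field_simp
    ring
  · rw [hlamF]; rw [hMstar] at hS ⊢
    field_simp
    ring
  · intro M F hF h1 h2
    simp only [mul_zero, zero_mul, add_zero, mul_zero, zero_add] at h1 h2
    have hSne : M + F ≠ 0 := by
      intro h
      rw [h, div_zero, zero_mul] at h2
      nlinarith
    -- μm M = μf F
    have hmm : μm * M = μf * F := by
      have := sub_eq_zero.mpr (h1.trans h2.symm)
      nlinarith [this]
    have hMpos : 0 < M := by
      rcases lt_trichotomy M 0 with h | h | h
      · exfalso; nlinarith
      · exfalso; rw [h, mul_zero] at hmm; nlinarith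
      · exact h
    have hSpos : 0 < M + F := by linarith
    -- from h2 : μf F (M+F) = lam F * M * F
    have h2' : μf * F * (M + F) = lam F * (M * F) := by
      field_simp at h2
      linarith [h2]
    have hlamFc : lam F = c := by
      have hF' : lam F * M = μf * (M + F) := by
        have hFne : F ≠ 0 := ne_of_gt hF
        have := mul_right_cancel₀ hFne (by nlinarith : μf * (M + F) * F = lam F * M * F)
        linarith
      have : lam F * M = (μf + μm) * M := by nlinarith
      have := mul_right_cancel₀ (ne_of_gt hMpos) this
      rw [this, hc]
    have hFF : F = Fstar := huniq F hF hlamFc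
    constructor
    · rw [hMstar, ← hFF]
      field_simp
      linarith [hmm]
    · exact hFF
end

section
/- Assume τ = 1, μ_m, μ_f, μ_mw, μ_fw > 0, β ∈ [0,1), γ ∈ [0,1), and let λ : [0,∞) → ℝ be continuous and strictly monotone decreasing with λ(F_tot) → λ_min as F_tot → ∞, where λ_min < ((1−γ)μ_fw + μ_mw)/((1−β)(1−γ)) < λ(0). Then there exist unique F_w* > 0 and M_w* > 0 with μ_mw M_w* = (1−γ) μ_fw F_w* and μ_fw = (λ(F_w*)/(M_w* + F_w*))·(1−β)·M_w*, equivalently (1−γ)μ_fw + μ_mw = (1−β)(1−γ)·λ(F_w*); and the constant quadruple (0, 0, M_w*, F_w*) is an equilibrium of the Wolbachia mosquito ODE system with τ = 1. -/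
/-!
STATEMENT 5: For complete maternal transmission (`τ = 1`), existence and
uniqueness of the Wolbachia-infected boundary equilibrium `(0, 0, M_w*, F_w*)`
of the Wolbachia mosquito model, characterised by
`μ_mw M_w* = (1−γ) μ_fw F_w*` and
`μ_fw = (lam F_w*/(M_w* + F_w*))·(1−β)·M_w*`, equivalently
`(1−γ)μ_fw + μ_mw = (1−β)(1−γ)·lam F_w*`.
-/

open Filter Set

set_option maxHeartbeats 1000000 in
theorem wolbachia_infected_boundary_equilibrium
    (μm μf μmw μfw β τ q γ lamMin : ℝ)
    (hμm : 0 < μm) (hμf : 0 < μf) (hμmw : 0 < μmw) (hμfw : 0 < μfw)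
    (hβ : 0 ≤ β ∧ β < 1) (hγ : 0 ≤ γ ∧ γ < 1) (hq : 0 ≤ q ∧ q ≤ 1)
    (hτ : τ = 1)
    (lam : ℝ → ℝ)
    (hcont : ContinuousOn lam (Set.Ici 0))
    (hanti : StrictAntiOn lam (Set.Ici 0))
    (hlim : Filter.Tendsto lam Filter.atTop (nhds lamMin))
    (hlow : lamMin < ((1 - γ) * μfw + μmw) / ((1 - β) * (1 - γ)))
    (hhigh : ((1 - γ) * μfw + μmw) / ((1 - β) * (1 - γ)) < lam 0) :
    ∃ Fws Mws : ℝ, 0 < Fws ∧ 0 < Mws ∧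
      μmw * Mws = (1 - γ) * μfw * Fws ∧
      μfw = lam Fws / (Mws + Fws) * ((1 - β) * Mws) ∧
      (1 - γ) * μfw + μmw = (1 - β) * (1 - γ) * lam Fws ∧
      -- uniqueness
      (∀ Fws' Mws' : ℝ, 0 < Fws' → 0 < Mws' →
        μmw * Mws' = (1 - γ) * μfw * Fws' →
        μfw = lam Fws' / (Mws' + Fws') * ((1 - β) * Mws') →
        Fws' = Fws ∧ Mws' = Mws) ∧
      -- (0, 0, M_w*, F_w*) is an equilibrium of the full system with τ = 1
      (-μm * 0 + lam (0 + Fws) / (0 + 0 + Mws + Fws) *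
        (0 * 0 + (1 - β) * (1 - τ) * (0 * Fws + Mws * Fws) +
          (1 - q) * (Mws * 0)) = 0) ∧
      (-μf * 0 + lam (0 + Fws) / (0 + 0 + Mws + Fws) *
        (0 * 0 + (1 - β) * (1 - τ) * (0 * Fws + Mws * Fws) +
          (1 - q) * (Mws * 0)) = 0) ∧
      (-μmw * Mws + lam (0 + Fws) / (0 + 0 + Mws + Fws) *
        ((1 - β) * τ * (1 - γ) * (0 * Fws + Mws * Fws)) = 0) ∧
      (-μfw * Fws + lam (0 + Fws) / (0 + 0 + Mws + Fws) *
        ((1 - β) * τ * (0 * Fws + Mws * Fws)) = 0) := by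
  obtain ⟨hβ0, hβ1⟩ := hβ
  obtain ⟨hγ0, hγ1⟩ := hγ
  have h1β : (0:ℝ) < 1 - β := by linarith
  have h1γ : (0:ℝ) < 1 - γ := by linarith
  have hd : (0:ℝ) < (1 - β) * (1 - γ) := mul_pos h1β h1γ
  obtain ⟨c, hc⟩ : ∃ c : ℝ, c = ((1 - γ) * μfw + μmw) / ((1 - β) * (1 - γ)) := ⟨_, rfl⟩
  rw [← hc] at hlow hhigh
  have hnum : (0:ℝ) < (1 - γ) * μfw + μmw := by nlinarith
  have hcpos : 0 < c := by rw [hc]; exact div_pos hnum hd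
  have hev : ∀ᶠ x in atTop, lam x < c := hlim.eventually (gt_mem_nhds hlow)
  obtain ⟨a, ha⟩ := eventually_atTop.mp hev
  have hx0 : (0:ℝ) ≤ max a 1 := le_trans zero_le_one (le_max_right a 1)
  have hlx : lam (max a 1) < c := ha _ (le_max_left a 1)
  have hsub : Icc (0:ℝ) (max a 1) ⊆ Ici 0 := fun y hy => hy.1
  have hivt := intermediate_value_Icc' hx0 (hcont.mono hsub)
  obtain ⟨Fws, hFmem, hFeq⟩ := hivt ⟨hlx.le, hhigh.le⟩
  have hFpos : 0 < Fws := by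
    rcases lt_or_eq_of_le hFmem.1 with h | h
    · exact h
    · exfalso; rw [← h] at hFeq; rw [hFeq] at hhigh; exact lt_irrefl _ hhigh
  obtain ⟨M, hMdefn⟩ : ∃ M : ℝ, M = (1 - γ) * μfw * Fws / μmw := ⟨_, rfl⟩
  have hMpos : 0 < M := by rw [hMdefn]; exact div_pos (mul_pos (mul_pos h1γ hμfw) hFpos) hμmw
  have hMF : 0 < M + Fws := by linarith
  have key2 : μmw * M = (1 - γ) * μfw * Fws := by
    rw [hMdefn]; field_simp
  have hkey : (1 - γ) * μfw + μmw = (1 - β) * (1 - γ) * lam Fws := by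
    rw [hFeq, hc]; field_simp
  have heqn : μfw = lam Fws / (M + Fws) * ((1 - β) * M) := by
    rw [div_mul_eq_mul_div, eq_div_iff hMF.ne']
    apply mul_right_cancel₀ h1γ.ne'
    linear_combination M * hkey - key2
  have hbase : lam Fws / (M + Fws) * ((1 - β) * M) * Fws = μfw * Fws := by
    rw [← heqn]
  refine ⟨Fws, M, hFpos, hMpos, key2, heqn, hkey, ?_, ?_, ?_, ?_, ?_⟩
  · intro Fws' Mws' hF' hM' h1 h2
    have hMF' : 0 < Mws' + Fws' := by linarith
    rw [div_mul_eq_mul_div, eq_div_iff hMF'.ne'] at h2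
    have hlam' : lam Fws' = c := by
      rw [hc, eq_div_iff hd.ne']
      apply mul_right_cancel₀ hM'.ne'
      linear_combination (γ - 1) * h2 - h1
    have hF : Fws' = Fws := hanti.injOn hF'.le hFmem.1 (by rw [hlam', hFeq])
    refine ⟨hF, ?_⟩
    rw [hF] at h1
    rw [← key2] at h1
    exact mul_left_cancel₀ hμmw.ne' h1
  · rw [hτ]; ring
  · rw [hτ]; ring
  · simp only [hτ, zero_add, zero_mul, mul_one]
    linear_combination (1 - γ) * hbase - key2
  · simp only [hτ, zero_add, zero_mul, mul_one]
    linear_combination hbase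
end

section
/- Let μ_m, μ_f, μ_mw, μ_fw > 0, β ∈ [0,1), τ ∈ (0,1], and define κ₁(λ*) = μ_fw + μ_fw²/μ_mw − λ*(1−β)τ·μ_fw/μ_mw and κ₂(λ*) = −μ_fw − μ_fw·μ_f/μ_m + λ*(1−β)τ·μ_f/μ_m. If there exists a real λ* with κ₁(λ*) = 0 and κ₂(λ*) = 0, then μ_fw/μ_f = μ_mw/μ_m. -/
/-!
STATEMENT 11: If `κ₁(λ*) = 0` and `κ₂(λ*) = 0` simultaneously for some real
`λ*`, then the mortality ratios satisfy `μ_fw/μ_f = μ_mw/μ_m`.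
-/

theorem kappa_common_root_implies_ratio
    (μm μf μmw μfw β τ : ℝ)
    (hμm : 0 < μm) (hμf : 0 < μf) (hμmw : 0 < μmw) (hμfw : 0 < μfw)
    (hβ : 0 ≤ β ∧ β < 1) (hτ : 0 < τ ∧ τ ≤ 1)
    (h : ∃ lamStar : ℝ,
      μfw + μfw ^ 2 / μmw - lamStar * (1 - β) * τ * (μfw / μmw) = 0 ∧
      -μfw - μfw * (μf / μm) + lamStar * (1 - β) * τ * (μf / μm) = 0) :
    μfw / μf = μmw / μm := by
  obtain ⟨l, h1, h2⟩ := h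
  have hm := hμm.ne'
  have hmw := hμmw.ne'
  have hf := hμf.ne'
  have hfw := hμfw.ne'
  field_simp at h1 h2 ⊢
  -- h1: λ(1-β)τ = μmw + μfw (after scaling), h2 similar
  nlinarith [mul_pos hμm hμmw, mul_pos hμf hμfw, sq_nonneg (μm - μf),
    mul_pos hμfw hμm, h1, h2, mul_pos (mul_pos hμfw hμm) hμmw]
end

section
/- Let μ_m, μ_f, μ_mw, μ_fw > 0, β ∈ [0,1), q ∈ (0,1], with μ_f(1−β) > μ_fw and μ_m μ_fw ≠ μ_f μ_mw. Let λ* be determined by λ*·q(1−β)·μ_fw μ_f/(μ_mw μ_m) = (1−β)(μ_f μ_fw/μ_mw − μ_f²/μ_m) + q·μ_f μ_fw²/(μ_m μ_mw) + μ_f μ_fw/μ_m − (1−q)·μ_fw²/μ_mw. Then, with κ₁(λ*) = μ_fw + μ_fw²/μ_mw − λ*(1−β)μ_fw/μ_mw and κ₂(λ*) = −μ_fw − μ_fw μ_f/μ_m + λ*(1−β)μ_f/μ_m (i.e. the case τ = 1), one has κ₁(λ*) = (1 − μ_m μ_fw/(μ_f μ_mw))·[μ_fw + ((1−β)μ_f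 − μ_fw)/q], κ₂(λ*) = (1/q)((1−β)μ_f − μ_fw)·(1 − μ_f μ_mw/(μ_m μ_fw)), and κ₁(λ*)·κ₂(λ*) < 0. -/
/-!
STATEMENT 12: With `τ = 1`, and `λ*` the unique candidate value from equation
(3.12) of the paper, the quantities `κ₁(λ*)` and `κ₂(λ*)` have the displayed
factorised forms and `κ₁(λ*)·κ₂(λ*) < 0`.
-/

theorem kappa_product_negative
    (μm μf μmw μfw β q lamStar : ℝ)
    (hμm : 0 < μm) (hμf : 0 < μf) (hμmw : 0 < μmw) (hμfw : 0 < μfw)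
    (hβ : 0 ≤ β ∧ β < 1) (hq : 0 < q ∧ q ≤ 1)
    (hcost : μfw < μf * (1 - β))
    (hne : μm * μfw ≠ μf * μmw)
    (hlamStar : lamStar * (q * (1 - β) * (μfw * μf / (μmw * μm))) =
      (1 - β) * (μf * μfw / μmw - μf ^ 2 / μm) +
        q * (μf * μfw ^ 2 / (μm * μmw)) +
        μf * μfw / μm - (1 - q) * (μfw ^ 2 / μmw)) :
    (μfw + μfw ^ 2 / μmw - lamStar * (1 - β) * (μfw / μmw) =
      (1 - μm * μfw / (μf * μmw)) * (μfw + ((1 - β) * μf - μfw) / q)) ∧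
    (-μfw - μfw * μf / μm + lamStar * (1 - β) * (μf / μm) =
      1 / q * ((1 - β) * μf - μfw) * (1 - μf * μmw / (μm * μfw))) ∧
    (μfw + μfw ^ 2 / μmw - lamStar * (1 - β) * (μfw / μmw)) *
      (-μfw - μfw * μf / μm + lamStar * (1 - β) * (μf / μm)) < 0 := by
  obtain ⟨hβ0, hβ1⟩ := hβ
  obtain ⟨hq0, hq1⟩ := hq
  have hm := hμm.ne'
  have hf := hμf.ne'
  have hmw := hμmw.ne'
  have hfw := hμfw.ne'
  have hqne := hq0.ne'
  have hb : (0:ℝ) < 1 - β := by linarith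
  have hbne := hb.ne'
  have hd : q * (1 - β) * (μfw * μf / (μmw * μm)) ≠ 0 := by positivity
  have hl : lamStar =
      ((1 - β) * (μf * μfw / μmw - μf ^ 2 / μm) +
        q * (μf * μfw ^ 2 / (μm * μmw)) +
        μf * μfw / μm - (1 - q) * (μfw ^ 2 / μmw)) /
      (q * (1 - β) * (μfw * μf / (μmw * μm))) := by
    rw [eq_div_iff hd]; exact hlamStar
  subst hl
  have h1 : μfw + μfw ^ 2 / μmw -
      (((1 - β) * (μf * μfw / μmw - μf ^ 2 / μm) +
        q * (μf * μfw ^ 2 / (μm * μmw)) +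
        μf * μfw / μm - (1 - q) * (μfw ^ 2 / μmw)) /
      (q * (1 - β) * (μfw * μf / (μmw * μm)))) * (1 - β) * (μfw / μmw) =
      (1 - μm * μfw / (μf * μmw)) * (μfw + ((1 - β) * μf - μfw) / q) := by
    field_simp
    ring
  have h2 : -μfw - μfw * μf / μm +
      (((1 - β) * (μf * μfw / μmw - μf ^ 2 / μm) +
        q * (μf * μfw ^ 2 / (μm * μmw)) +
        μf * μfw / μm - (1 - q) * (μfw ^ 2 / μmw)) /
      (q * (1 - β) * (μfw * μf / (μmw * μm)))) * (1 - β) * (μf / μm) =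
      1 / q * ((1 - β) * μf - μfw) * (1 - μf * μmw / (μm * μfw)) := by
    field_simp
    ring
  refine ⟨h1, h2, ?_⟩
  rw [h1, h2]
  have hP1 : 0 < μfw + ((1 - β) * μf - μfw) / q := by
    have : 0 < ((1 - β) * μf - μfw) / q := by
      apply div_pos; nlinarith; exact hq0
    linarith
  have hP2 : 0 < 1 / q * ((1 - β) * μf - μfw) := by
    apply mul_pos (by positivity); nlinarith
  have key : (1 - μm * μfw / (μf * μmw)) * (1 - μf * μmw / (μm * μfw)) < 0 := by
    have h : (1 - μm * μfw / (μf * μmw)) * (1 - μf * μmw / (μm * μfw)) =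
        -((μm * μfw - μf * μmw) ^ 2 / ((μf * μmw) * (μm * μfw))) := by
      field_simp; ring
    rw [h]
    have hsub : μm * μfw - μf * μmw ≠ 0 := sub_ne_zero.mpr hne
    have hsq : 0 < (μm * μfw - μf * μmw) ^ 2 := by positivity
    have : 0 < (μm * μfw - μf * μmw) ^ 2 / ((μf * μmw) * (μm * μfw)) := by
      apply div_pos hsq (by positivity)
    linarith
  calc (1 - μm * μfw / (μf * μmw)) * (μfw + ((1 - β) * μf - μfw) / q) *
      (1 / q * ((1 - β) * μf - μfw) * (1 - μf * μmw / (μm * μfw)))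
      = ((1 - μm * μfw / (μf * μmw)) * (1 - μf * μmw / (μm * μfw))) *
        ((μfw + ((1 - β) * μf - μfw) / q) * (1 / q * ((1 - β) * μf - μfw))) := by ring
    _ < 0 := mul_neg_of_neg_of_pos key (mul_pos hP1 hP2)
end

section
/- Suppose γ = 0, τ = 1, μ_m, μ_f, μ_mw, μ_fw > 0, β ∈ [0,1), q ∈ (0,1], μ_f(1−β) > μ_fw, μ_m μ_fw ≠ μ_f μ_mw, and λ : [0,∞) → (0,∞) is strictly monotone decreasing. Then the Wolbachia mosquito ODE system has no coexistence equilibrium, i.e. there are no values M, F, M_w, F_w > 0 at which all four right-hand sides of the system vanish. -/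
/-!
STATEMENT 13: With `γ = 0`, `τ = 1`, `μ_f(1−β) > μ_fw` and
`μ_m μ_fw ≠ μ_f μ_mw`, and `lam` strictly decreasing and positive, the
Wolbachia mosquito system has no coexistence equilibrium with all four
components strictly positive.
-/

theorem no_coexistence_equilibrium
    (μm μf μmw μfw β τ q γ : ℝ)
    (hμm : 0 < μm) (hμf : 0 < μf) (hμmw : 0 < μmw) (hμfw : 0 < μfw)
    (hβ : 0 ≤ β ∧ β < 1) (hq : 0 < q ∧ q ≤ 1)
    (hγ : γ = 0) (hτ : τ = 1)
    (hcost : μfw < μf * (1 - β))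
    (hne : μm * μfw ≠ μf * μmw)
    (lam : ℝ → ℝ)
    (hpos : ∀ x ≥ (0 : ℝ), 0 < lam x)
    (hanti : StrictAntiOn lam (Set.Ici 0)) :
    ¬ ∃ M F Mw Fw : ℝ, 0 < M ∧ 0 < F ∧ 0 < Mw ∧ 0 < Fw ∧
      (-μm * M + lam (F + Fw) / (M + F + Mw + Fw) *
        (M * F + (1 - β) * (1 - τ) * (M * Fw + Mw * Fw) +
          (1 - q) * (Mw * F)) = 0) ∧
      (-μf * F + lam (F + Fw) / (M + F + Mw + Fw) *
        (M * F + (1 - β) * (1 - τ) * (M * Fw + Mw * Fw) +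
          (1 - q) * (Mw * F)) = 0) ∧
      (-μmw * Mw + lam (F + Fw) / (M + F + Mw + Fw) *
        ((1 - β) * τ * (1 - γ) * (M * Fw + Mw * Fw)) = 0) ∧
      (-μfw * Fw + lam (F + Fw) / (M + F + Mw + Fw) *
        ((1 - β) * τ * (M * Fw + Mw * Fw)) = 0) := by
  subst hγ hτ
  rintro ⟨M, F, Mw, Fw, hM, hF, hMw, hFw, e1, e2, e3, e4⟩
  have hN : (0:ℝ) < M + F + Mw + Fw := by linarith
  set L : ℝ := lam (F + Fw) / (M + F + Mw + Fw) with hLdef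
  have hL : 0 < L := div_pos (hpos _ (by linarith)) hN
  -- from e2: μf = L * (M + (1-q)*Mw)
  have h2 : μf * F = L * (M + (1 - q) * Mw) * F := by ring_nf; ring_nf at e2; linarith
  have h2' : μf = L * (M + (1 - q) * Mw) := by
    have := mul_right_cancel₀ (ne_of_gt hF) h2
    exact this
  -- from e4: μfw = L * (1-β) * (M + Mw)
  have h4 : μfw * Fw = L * (1 - β) * (M + Mw) * Fw := by
    ring_nf; ring_nf at e4; linarith
  have h4' : μfw = L * (1 - β) * (M + Mw) := mul_right_cancel₀ (ne_of_gt hFw) h4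
  nlinarith [mul_pos (mul_pos hL (by linarith : (0:ℝ) < 1 - β)) (mul_pos hq.1 hMw)]
end

section
/- Let μ_m, μ_f, μ_fw > 0, β ∈ [0,1), q ∈ [0,1], F_w*, M_w* > 0, λ₀ > 0 with μ_fw = (λ₀/(M_w* + F_w*))·(1−β)·M_w*, and suppose (1−β)μ_f > (1−q)μ_fw. Then the system of equations μ_m M¹ = (λ₀/(M_w* + F_w*))·[(1−β)M_w* F_w* + (1−q)M_w* F¹] and μ_f F¹ = (λ₀/(M_w* + F_w*))·[(1−β)M_w* F_w* + (1−q)M_w* F¹] has the unique solution F¹ = (1−β)μ_fw F_w* / ((1−β)μ_f − (1−q)μ_fw) and M¹ = μ_fw μ_f (1−β) F_w* / (μ_m[(1−β)μ_f − (1−q)μ_fw]), and both F¹ > 0 and M¹ > 0. In particular M¹/F¹ = μ_f/μ_m. -/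
/-!
Since `μ_fw = c (1 − β) M_w*` with `c = λ₀/(M_w* + F_w*)`, multiplying the female equation by
`1 − β` turns it into the linear equation `((1 − β) μ_f − (1 − q) μ_fw) F¹ = (1 − β) μ_fw F_w*`,
whose coefficient is positive by assumption; this pins down `F¹`. Both equations share their
right-hand side, so `μ_m M¹ = μ_f F¹`, which pins down `M¹` and gives the ratio.
-/

section FirstOrderSystem

variable {c b q μm μf μfw Mws Fws : ℝ}

theorem female_eq_iff_linear (hb : b ≠ 0) (hrel : μfw = c * (b * Mws)) (F : ℝ) :
    μf * F = c * (b * Mws * Fws + (1 - q) * Mws * F) ↔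
      (b * μf - (1 - q) * μfw) * F = b * μfw * Fws := by
  subst hrel
  constructor
  · intro h
    linear_combination b * h
  · intro h
    refine mul_left_cancel₀ hb ?_
    linear_combination h

theorem female_eq_iff (hb : b ≠ 0) (hrel : μfw = c * (b * Mws))
    (hD : b * μf - (1 - q) * μfw ≠ 0) (F : ℝ) :
    μf * F = c * (b * Mws * Fws + (1 - q) * Mws * F) ↔
      F = b * μfw * Fws / (b * μf - (1 - q) * μfw) := by
  rw [female_eq_iff_linear hb hrel, eq_div_iff hD, mul_comm]

theorem male_coeff_eq_div_mul_female_coeff :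
    μfw * μf * b * Fws / (μm * (b * μf - (1 - q) * μfw)) =
      μf / μm * (b * μfw * Fws / (b * μf - (1 - q) * μfw)) := by
  rw [div_mul_div_comm]
  ring

theorem first_order_system_iff (hb : b ≠ 0) (hμm : μm ≠ 0) (hrel : μfw = c * (b * Mws))
    (hD : b * μf - (1 - q) * μfw ≠ 0) (M F : ℝ) :
    (μm * M = c * (b * Mws * Fws + (1 - q) * Mws * F) ∧
        μf * F = c * (b * Mws * Fws + (1 - q) * Mws * F)) ↔
      M = μfw * μf * b * Fws / (μm * (b * μf - (1 - q) * μfw)) ∧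
        F = b * μfw * Fws / (b * μf - (1 - q) * μfw) := by
  rw [male_coeff_eq_div_mul_female_coeff]
  constructor
  · rintro ⟨hmale, hfemale⟩
    have hF := (female_eq_iff hb hrel hD F).mp hfemale
    refine ⟨?_, hF⟩
    rw [← hF, div_mul_eq_mul_div, eq_div_iff hμm, mul_comm, hmale, hfemale]
  · rintro ⟨rfl, hF⟩
    have hfemale := (female_eq_iff hb hrel hD F).mpr hF
    refine ⟨?_, hfemale⟩
    rw [← hF, ← hfemale]
    field_simp

end FirstOrderSystem

theorem perturbation_first_order_coefficients_general
    (μm μf μfw β q Mws Fws lam0 : ℝ)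
    (hμm : 0 < μm) (hμf : 0 < μf) (hμfw : 0 < μfw)
    (hβ : 0 ≤ β ∧ β < 1)
    (hFws : 0 < Fws)
    (hrel : μfw = lam0 / (Mws + Fws) * ((1 - β) * Mws))
    (hcond : (1 - q) * μfw < (1 - β) * μf) :
    let F1 : ℝ := (1 - β) * μfw * Fws / ((1 - β) * μf - (1 - q) * μfw)
    let M1 : ℝ := μfw * μf * (1 - β) * Fws /
      (μm * ((1 - β) * μf - (1 - q) * μfw))
    (μm * M1 = lam0 / (Mws + Fws) *
      ((1 - β) * Mws * Fws + (1 - q) * Mws * F1)) ∧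
    (μf * F1 = lam0 / (Mws + Fws) *
      ((1 - β) * Mws * Fws + (1 - q) * Mws * F1)) ∧
    (∀ M' F' : ℝ,
      μm * M' = lam0 / (Mws + Fws) *
        ((1 - β) * Mws * Fws + (1 - q) * Mws * F') →
      μf * F' = lam0 / (Mws + Fws) *
        ((1 - β) * Mws * Fws + (1 - q) * Mws * F') →
      M' = M1 ∧ F' = F1) ∧
    0 < F1 ∧ 0 < M1 ∧ M1 / F1 = μf / μm := by
  intro F1 M1
  have hb : 0 < 1 - β := sub_pos.mpr hβ.2
  have hD : 0 < (1 - β) * μf - (1 - q) * μfw := sub_pos.mpr hcond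
  have hsol := first_order_system_iff (Fws := Fws) hb.ne' hμm.ne' hrel hD.ne'
  have hF1 : 0 < F1 := by positivity
  obtain ⟨hmale, hfemale⟩ := (hsol M1 F1).mpr ⟨rfl, rfl⟩
  refine ⟨hmale, hfemale, fun M' F' hM' hF' => (hsol M' F').mp ⟨hM', hF'⟩, hF1,
    by positivity, ?_⟩
  rw [show M1 = μf / μm * F1 from male_coeff_eq_div_mul_female_coeff,
    mul_div_cancel_right₀ _ hF1.ne']

theorem perturbation_first_order_coefficients
    (μm μf μfw β q Mws Fws lam0 : ℝ)
    (hμm : 0 < μm) (hμf : 0 < μf) (hμfw : 0 < μfw)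
    (hβ : 0 ≤ β ∧ β < 1) (hq : 0 ≤ q ∧ q ≤ 1)
    (hMws : 0 < Mws) (hFws : 0 < Fws) (hlam0 : 0 < lam0)
    (hrel : μfw = lam0 / (Mws + Fws) * ((1 - β) * Mws))
    (hcond : (1 - q) * μfw < (1 - β) * μf) :
    let F1 : ℝ := (1 - β) * μfw * Fws / ((1 - β) * μf - (1 - q) * μfw)
    let M1 : ℝ := μfw * μf * (1 - β) * Fws /
      (μm * ((1 - β) * μf - (1 - q) * μfw))
    (μm * M1 = lam0 / (Mws + Fws) *
      ((1 - β) * Mws * Fws + (1 - q) * Mws * F1)) ∧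
    (μf * F1 = lam0 / (Mws + Fws) *
      ((1 - β) * Mws * Fws + (1 - q) * Mws * F1)) ∧
    (∀ M' F' : ℝ,
      μm * M' = lam0 / (Mws + Fws) *
        ((1 - β) * Mws * Fws + (1 - q) * Mws * F') →
      μf * F' = lam0 / (Mws + Fws) *
        ((1 - β) * Mws * Fws + (1 - q) * Mws * F') →
      M' = M1 ∧ F' = F1) ∧
    0 < F1 ∧ 0 < M1 ∧ M1 / F1 = μf / μm :=
  perturbation_first_order_coefficients_general μm μf μfw β q Mws Fws lam0 hμm hμf hμfw hβ hFws hrel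
    hcond
end

section
/- Suppose γ = 0 and μ_f/μ_m = μ_fw/μ_mw = μ, where μ_m, μ_f, μ_mw, μ_fw > 0, β ∈ [0,1), τ ∈ (0,1]. Then any coexistence equilibrium (M, F, M_w, F_w) of the Wolbachia mosquito ODE system with all components strictly positive satisfies M = μF, M_w = μF_w, and λ(F + F_w) = (1 + μ)μ_fw / (μ(1−β)τ). -/
/-!
STATEMENT 15: If `γ = 0` and `μ_f/μ_m = μ_fw/μ_mw = μ`, then any coexistence
equilibrium of the Wolbachia mosquito system satisfies `M = μF`, `M_w = μF_w`
and `λ(F + F_w) = (1 + μ) μ_fw / (μ (1−β) τ)`.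
-/

theorem coexistence_equilibrium_equal_ratios
    (μm μf μmw μfw β τ q γ μ : ℝ)
    (hμm : 0 < μm) (hμf : 0 < μf) (hμmw : 0 < μmw) (hμfw : 0 < μfw)
    (hβ : 0 ≤ β ∧ β < 1) (hτ : 0 < τ ∧ τ ≤ 1)
    (hγ : γ = 0)
    (hratio1 : μf / μm = μ) (hratio2 : μfw / μmw = μ)
    (lam : ℝ → ℝ)
    (M F Mw Fw : ℝ)
    (hM : 0 < M) (hF : 0 < F) (hMw : 0 < Mw) (hFw : 0 < Fw)
    (heqM : -μm * M + lam (F + Fw) / (M + F + Mw + Fw) *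
      (M * F + (1 - β) * (1 - τ) * (M * Fw + Mw * Fw) +
        (1 - q) * (Mw * F)) = 0)
    (heqF : -μf * F + lam (F + Fw) / (M + F + Mw + Fw) *
      (M * F + (1 - β) * (1 - τ) * (M * Fw + Mw * Fw) +
        (1 - q) * (Mw * F)) = 0)
    (heqMw : -μmw * Mw + lam (F + Fw) / (M + F + Mw + Fw) *
      ((1 - β) * τ * (1 - γ) * (M * Fw + Mw * Fw)) = 0)
    (heqFw : -μfw * Fw + lam (F + Fw) / (M + F + Mw + Fw) *
      ((1 - β) * τ * (M * Fw + Mw * Fw)) = 0) :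
    M = μ * F ∧ Mw = μ * Fw ∧
    lam (F + Fw) = (1 + μ) * μfw / (μ * (1 - β) * τ) := by
  subst hγ
  have hμpos : 0 < μ := by rw [← hratio1]; positivity
  have hβ' : 0 < 1 - β := by linarith [hβ.2]
  have hτ' : 0 < τ := hτ.1
  have hFFw : 0 < F + Fw := by linarith
  have h1 : μm * M = μf * F := by linarith
  have hMF : M = μ * F := by
    rw [← hratio1]
    field_simp
    linarith [h1]
  simp only [sub_zero, mul_one] at heqMw
  have h2 : μmw * Mw = μfw * Fw := by linarith
  have hMwFw : Mw = μ * Fw := by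
    rw [← hratio2]
    field_simp
    linarith [h2]
  refine ⟨hMF, hMwFw, ?_⟩
  have hden : M + F + Mw + Fw = (1 + μ) * (F + Fw) := by
    rw [hMF, hMwFw]; ring
  rw [hden, hMF, hMwFw] at heqFw
  have h1μ : 0 < 1 + μ := by linarith
  rw [eq_div_iff (by positivity : (μ * (1 - β) * τ) ≠ 0)]
  have hne : ((1 + μ) * (F + Fw)) ≠ 0 := by positivity
  field_simp at heqFw
  nlinarith [heqFw, mul_pos hFw hFFw, sq_nonneg (F + Fw)]
end

section
/- Let all parameters μ_b, μ_bi, ν_i, ν_b, ν_f, μ_f, μ_fw, α_f, α_fw, p_bf, p_fb and the equilibrium values F_s*, F_ws*, B_s* be strictly positive, and let ε ∈ [0,1]. Define R₀ = (ν_b ν_f p_fb p_bf / ((μ_b + μ_bi + ν_i)(μ_b + ν_b))) · ( α_f²(F_s*/B_s*)/(μ_f(μ_f + ν_f)) + ε α_fw²(F_ws*/B_s*)/(μ_fw(μ_fw + ε ν_f)) ). If R₀ < 1, then for every real x ≥ 0 one has (x + μ_b + μ_bi + ν_i)(x + μ_b + ν_b)·B_s* > ν_b ν_f p_fb p_bf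 · [ α_f² F_s*/((x + μ_f)(x + μ_f + ν_f)) + ε α_fw² F_ws*/((x + μ_fw)(x + μ_fw + ε ν_f)) ]; consequently every real root of the characteristic equation (x + μ_b + μ_bi + ν_i)(x + μ_b + ν_b)·B_s* = ν_b ν_f p_fb p_bf·[α_f² F_s*/((x + μ_f)(x + μ_f + ν_f)) + ε α_fw² F_ws*/((x + μ_fw)(x + μ_fw + ε ν_f))] is strictly negative. -/
/-!
STATEMENT 18: If the basic reproduction number `R₀ < 1` for WNv at a
WNv-free equilibrium, then for all `x ≥ 0` the left-hand side of the
characteristic equation strictly exceeds the right-hand side; consequently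
every real root of the characteristic equation is strictly negative.
-/

set_option maxHeartbeats 1000000 in
theorem WNv_characteristic_roots_negative
    (μb μbi νi νb νf μf μfw αf αfw pbf pfb Fs Fws Bs ε : ℝ)
    (hμb : 0 < μb) (hμbi : 0 < μbi) (hνi : 0 < νi) (hνb : 0 < νb)
    (hνf : 0 < νf) (hμf : 0 < μf) (hμfw : 0 < μfw)
    (hαf : 0 < αf) (hαfw : 0 < αfw) (hpbf : 0 < pbf) (hpfb : 0 < pfb)
    (hFs : 0 < Fs) (hFws : 0 < Fws) (hBs : 0 < Bs)
    (hε : ε ∈ Set.Icc (0 : ℝ) 1)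
    (hR0 : νb * νf * pfb * pbf / ((μb + μbi + νi) * (μb + νb)) *
      (αf ^ 2 * (Fs / Bs) / (μf * (μf + νf)) +
        ε * αfw ^ 2 * (Fws / Bs) / (μfw * (μfw + ε * νf))) < 1) :
    (∀ x : ℝ, 0 ≤ x →
      νb * νf * pfb * pbf *
        (αf ^ 2 * Fs / ((x + μf) * (x + μf + νf)) +
          ε * αfw ^ 2 * Fws / ((x + μfw) * (x + μfw + ε * νf))) <
      (x + μb + μbi + νi) * (x + μb + νb) * Bs) ∧
    (∀ x : ℝ,
      (x + μb + μbi + νi) * (x + μb + νb) * Bs =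
        νb * νf * pfb * pbf *
          (αf ^ 2 * Fs / ((x + μf) * (x + μf + νf)) +
            ε * αfw ^ 2 * Fws / ((x + μfw) * (x + μfw + ε * νf))) →
      x < 0) := by
  obtain ⟨hε0, hε1⟩ := hε
  have hεν : 0 < μfw + ε * νf := by positivity
  have hd1 : (0:ℝ) < μf * (μf + νf) := by positivity
  have hd2 : (0:ℝ) < μfw * (μfw + ε * νf) := by positivity
  have hb : (0:ℝ) < (μb + μbi + νi) * (μb + νb) := by positivity
  -- rewrite R0 condition
  have h0 : νb * νf * pfb * pbf *
      (αf ^ 2 * Fs / (μf * (μf + νf)) +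
        ε * αfw ^ 2 * Fws / (μfw * (μfw + ε * νf))) <
      (μb + μbi + νi) * (μb + νb) * Bs := by
    have heq : νb * νf * pfb * pbf / ((μb + μbi + νi) * (μb + νb)) *
        (αf ^ 2 * (Fs / Bs) / (μf * (μf + νf)) +
          ε * αfw ^ 2 * (Fws / Bs) / (μfw * (μfw + ε * νf))) =
        (νb * νf * pfb * pbf *
          (αf ^ 2 * Fs / (μf * (μf + νf)) +
            ε * αfw ^ 2 * Fws / (μfw * (μfw + ε * νf)))) /
        ((μb + μbi + νi) * (μb + νb) * Bs) := by
      field_simp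
    rw [heq, div_lt_one (by positivity)] at hR0
    exact hR0
  have main : ∀ x : ℝ, 0 ≤ x →
      νb * νf * pfb * pbf *
        (αf ^ 2 * Fs / ((x + μf) * (x + μf + νf)) +
          ε * αfw ^ 2 * Fws / ((x + μfw) * (x + μfw + ε * νf))) <
      (x + μb + μbi + νi) * (x + μb + νb) * Bs := by
    intro x hx
    have hx1 : (0:ℝ) < (x + μf) * (x + μf + νf) := by positivity
    have hx2 : (0:ℝ) < (x + μfw) * (x + μfw + ε * νf) := by positivity
    have h1 : αf ^ 2 * Fs / ((x + μf) * (x + μf + νf)) ≤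
        αf ^ 2 * Fs / (μf * (μf + νf)) := by
      gcongr <;> linarith
    have h2 : ε * αfw ^ 2 * Fws / ((x + μfw) * (x + μfw + ε * νf)) ≤
        ε * αfw ^ 2 * Fws / (μfw * (μfw + ε * νf)) := by
      gcongr <;> first | positivity | linarith
    have h3 : (μb + μbi + νi) * (μb + νb) * Bs ≤
        (x + μb + μbi + νi) * (x + μb + νb) * Bs := by
      have : (μb + μbi + νi) * (μb + νb) ≤ (x + μb + μbi + νi) * (x + μb + νb) := by
        nlinarith
      nlinarith
    have h4 : νb * νf * pfb * pbf *
        (αf ^ 2 * Fs / ((x + μf) * (x + μf + νf)) +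
          ε * αfw ^ 2 * Fws / ((x + μfw) * (x + μfw + ε * νf))) ≤
        νb * νf * pfb * pbf *
        (αf ^ 2 * Fs / (μf * (μf + νf)) +
          ε * αfw ^ 2 * Fws / (μfw * (μfw + ε * νf))) := by
      gcongr <;> positivity
    linarith
  refine ⟨main, ?_⟩
  intro x hxeq
  by_contra hxc
  push_neg at hxc
  have := main x hxc
  linarith
end
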